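/- For every N ≥ 1 and distinct actions a, b, the equation e_N: a.0 ‖ p_N ≈ a.p_N + Σ_{i=1}^N b.(a.0 ‖ b^{i-1}a) is sound for bisimilarity, where p_N = Σ_{i=1}^N b^i.a. -/

import Mathlib

inductive Proc (A : Type) : Type where
  | nil : Proc A
  | pre : A → Proc A → Proc A
  | add : Proc A → Proc A → Proc A
  | par : Proc A → Proc A → Proc A

inductive Step {A : Type} : Proc A → A → Proc A → Prop where
  | pre (a : A) (p : Proc A) : Step (.pre a p) a p
  | addL {p : Proc A} {a : A} {p' : Proc A} (q : Proc A) :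
      Step p a p' → Step (.add p q) a p'
  | addR {q : Proc A} {a : A} {q' : Proc A} (p : Proc A) :
      Step q a q' → Step (.add p q) a q'
  | parL {p : Proc A} {a : A} {p' : Proc A} (q : Proc A) :
      Step p a p' → Step (.par p q) a (.par p' q)
  | parR {q : Proc A} {a : A} {q' : Proc A} (p : Proc A) :
      Step q a q' → Step (.par p q) a (.par p q')

inductive TraceTo {A : Type} : Proc A → List A → Proc A → Prop where
  | refl (p : Proc A) : TraceTo p [] p
  | step {p : Proc A} {a : A} {p' : Proc A} {α : List A} {q : Proc A} :
      Step p a p' → TraceTo p' α q → TraceTo p (a :: α) q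

def traces {A : Type} (p : Proc A) : Set (List A) := {α | ∃ q, TraceTo p α q}

def stuck {A : Type} (p : Proc A) : Prop := ∀ (a : A) (q : Proc A), ¬ Step p a q

def ctraces {A : Type} (p : Proc A) : Set (List A) :=
  {α | ∃ q, TraceTo p α q ∧ stuck q}

def initials {A : Type} (p : Proc A) : Set A := {a | ∃ p', Step p a p'}

def IsSimulation {A : Type} (R : Proc A → Proc A → Prop) : Prop :=
  ∀ p q, R p q → ∀ (a : A) (p' : Proc A), Step p a p' → ∃ q', Step q a q' ∧ R p' q'

def SimEquiv {A : Type} (p q : Proc A) : Prop :=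
  (∃ R, IsSimulation R ∧ R p q) ∧ (∃ R, IsSimulation R ∧ R q p)

def IsReadySimulation {A : Type} (R : Proc A → Proc A → Prop) : Prop :=
  IsSimulation R ∧ ∀ p q, R p q → initials p = initials q

def RSEquiv {A : Type} (p q : Proc A) : Prop :=
  (∃ R, IsReadySimulation R ∧ R p q) ∧ (∃ R, IsReadySimulation R ∧ R q p)

def IsCompletedSimulation {A : Type} (R : Proc A → Proc A → Prop) : Prop :=
  IsSimulation R ∧ ∀ p q, R p q → stuck p → stuck q

def CSEquiv {A : Type} (p q : Proc A) : Prop :=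
  (∃ R, IsCompletedSimulation R ∧ R p q) ∧ (∃ R, IsCompletedSimulation R ∧ R q p)

def Bisim {A : Type} (p q : Proc A) : Prop :=
  ∃ R, (∀ x y, R x y → R y x) ∧ IsSimulation R ∧ R p q

noncomputable def depth {A : Type} (p : Proc A) : ℕ :=
  sSup (List.length '' ctraces p)

noncomputable def norm {A : Type} (p : Proc A) : ℕ :=
  sInf (List.length '' ctraces p)

/-- `bpow a b i` is the process `b^i a`. -/
def bpow {A : Type} (a b : A) : ℕ → Proc A
  | 0 => Proc.pre a Proc.nil
  | i + 1 => Proc.pre b (bpow a b i)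

def listSum {A : Type} : List (Proc A) → Proc A
  | [] => Proc.nil
  | t :: ts => Proc.add t (listSum ts)

/-- `pN a b N` is `Σ_{i=1}^N b^i a`. -/
def pN {A : Type} (a b : A) (N : ℕ) : Proc A :=
  listSum ((List.range N).map fun i => bpow a b (i + 1))

/-! The right-hand side of `e_N` is the expansion of `a.0 ‖ p_N`: it has the transitions of
`a.0 ‖ p_N`, except that its `a`-move leads to `p_N` instead of `0 ‖ p_N`. Hence the two sides,
together with the identity and the pairs `(0 ‖ p, p)`, closed under symmetry, form a
bisimulation. -/

namespace Step

variable {A : Type}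

theorem not_nil {c : A} {r : Proc A} : ¬ Step .nil c r := nofun

theorem pre_iff {a c : A} {p r : Proc A} : Step (.pre a p) c r ↔ c = a ∧ r = p := by
  constructor
  · rintro ⟨⟩
    exact ⟨rfl, rfl⟩
  · rintro ⟨rfl, rfl⟩
    exact .pre _ _

theorem add_iff {c : A} {p q r : Proc A} : Step (.add p q) c r ↔ Step p c r ∨ Step q c r := by
  constructor
  · rintro (⟨_, _⟩ | ⟨_, _⟩)
    exacts [.inl ‹_›, .inr ‹_›]
  · rintro (h | h)
    exacts [.addL _ h, .addR _ h]

theorem par_iff {c : A} {p q r : Proc A} :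
    Step (.par p q) c r ↔
      (∃ p', Step p c p' ∧ r = .par p' q) ∨ ∃ q', Step q c q' ∧ r = .par p q' := by
  constructor
  · rintro (⟨_, _⟩ | ⟨_, _⟩)
    exacts [.inl ⟨_, ‹_›, rfl⟩, .inr ⟨_, ‹_›, rfl⟩]
  · rintro (⟨p', h, rfl⟩ | ⟨q', h, rfl⟩)
    exacts [.parL _ h, .parR _ h]

theorem listSum_iff {l : List (Proc A)} {c : A} {r : Proc A} :
    Step (listSum l) c r ↔ ∃ t ∈ l, Step t c r := by
  induction l with
  | nil => simp [listSum, not_nil]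
  | cons t ts ih => simp [listSum, add_iff, ih]

theorem listSum_map_pre_iff {b c : A} {N : ℕ} {f : ℕ → Proc A} {r : Proc A} :
    Step (listSum ((List.range N).map fun i => .pre b (f i))) c r ↔
      c = b ∧ ∃ i < N, r = f i := by
  simp only [listSum_iff, List.mem_map, List.mem_range]
  constructor
  · rintro ⟨_, ⟨i, hi, rfl⟩, h⟩
    obtain ⟨rfl, rfl⟩ := pre_iff.mp h
    exact ⟨rfl, i, hi, rfl⟩
  · rintro ⟨rfl, i, hi, rfl⟩
    exact ⟨_, ⟨i, hi, rfl⟩, .pre _ _⟩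

theorem pN_iff {a b c : A} {N : ℕ} {r : Proc A} :
    Step (pN a b N) c r ↔ c = b ∧ ∃ i < N, r = bpow a b i :=
  listSum_map_pre_iff

end Step

theorem Bisim.of_isSimulation {A : Type} {R : Proc A → Proc A → Prop} {p q : Proc A}
    (hR : IsSimulation R) (hR' : IsSimulation (flip R)) (hpq : R p q) : Bisim p q := by
  refine ⟨fun x y => R x y ∨ R y x, fun _ _ => Or.symm, ?_, .inl hpq⟩
  rintro x y (h | h) c x' hx
  · obtain ⟨y', hy, h'⟩ := hR x y h c x' hx
    exact ⟨y', hy, .inl h'⟩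
  · obtain ⟨y', hy, h'⟩ := hR' x y h c x' hx
    exact ⟨y', hy, .inr h'⟩

inductive UpToNilPar {A : Type} (x₀ y₀ : Proc A) : Proc A → Proc A → Prop where
  | refl (p : Proc A) : UpToNilPar x₀ y₀ p p
  | nil_par (p : Proc A) : UpToNilPar x₀ y₀ (.par .nil p) p
  | base : UpToNilPar x₀ y₀ x₀ y₀

section Expansion

variable {A : Type} {a : A} {p q : Proc A}

def IsExpansion (a : A) (p q : Proc A) : Prop :=
  ∀ c r, Step q c r ↔ (c = a ∧ r = p) ∨ ∃ p', Step p c p' ∧ r = .par (.pre a .nil) p'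

theorem IsExpansion.isSimulation (hq : IsExpansion a p q) :
    IsSimulation (UpToNilPar (.par (.pre a .nil) p) q) := by
  rintro _ _ (x | x | _) c r hr
  · exact ⟨r, hr, .refl r⟩
  · obtain ⟨_, h, _⟩ | ⟨x', h, rfl⟩ := Step.par_iff.mp hr
    · exact absurd h Step.not_nil
    · exact ⟨x', h, .nil_par x'⟩
  · obtain ⟨_, h, rfl⟩ | ⟨p', h, rfl⟩ := Step.par_iff.mp hr
    · obtain ⟨rfl, rfl⟩ := Step.pre_iff.mp h
      exact ⟨p, (hq _ _).mpr (.inl ⟨rfl, rfl⟩), .nil_par p⟩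
    · exact ⟨_, (hq _ _).mpr (.inr ⟨p', h, rfl⟩), .refl _⟩

theorem IsExpansion.isSimulation_flip (hq : IsExpansion a p q) :
    IsSimulation (flip (UpToNilPar (.par (.pre a .nil) p) q)) := by
  rintro _ _ (x | x | _) c r hr
  · exact ⟨r, hr, .refl r⟩
  · exact ⟨.par .nil r, .parR _ hr, .nil_par r⟩
  · obtain ⟨rfl, rfl⟩ | ⟨p', h, rfl⟩ := (hq c r).mp hr
    · exact ⟨.par .nil r, .parL _ (.pre _ _), .nil_par r⟩
    · exact ⟨_, .parR _ h, .refl _⟩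

theorem IsExpansion.bisim (hq : IsExpansion a p q) : Bisim (.par (.pre a .nil) p) q :=
  .of_isSimulation hq.isSimulation hq.isSimulation_flip .base

end Expansion

theorem eN_sound_bisim_general {A : Type}
    (a b : A) (N : ℕ) :
    Bisim (Proc.par (Proc.pre a Proc.nil) (pN a b N))
      (Proc.add (Proc.pre a (pN a b N))
        (listSum ((List.range N).map fun i =>
          Proc.pre b (Proc.par (Proc.pre a Proc.nil) (bpow a b i))))) := by
  refine IsExpansion.bisim fun c r => ?_
  simp only [Step.add_iff, Step.pre_iff, Step.listSum_map_pre_iff, Step.pN_iff]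
  constructor
  · rintro (h | ⟨rfl, i, hi, rfl⟩)
    exacts [.inl h, .inr ⟨_, ⟨rfl, i, hi, rfl⟩, rfl⟩]
  · rintro (h | ⟨_, ⟨rfl, i, hi, rfl⟩, rfl⟩)
    exacts [.inl h, .inr ⟨rfl, i, hi, rfl⟩]

theorem eN_sound_bisim {A : Type} [Fintype A] [Nonempty A]
    (a b : A) (hab : a ≠ b) (N : ℕ) (hN : 1 ≤ N) :
    Bisim (Proc.par (Proc.pre a Proc.nil) (pN a b N))
      (Proc.add (Proc.pre a (pN a b N))
        (listSum ((List.range N).map fun i =>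
          Proc.pre b (Proc.par (Proc.pre a Proc.nil) (bpow a b i))))) :=
  eN_sound_bisim_general a b N
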